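/- Let J : ℝ → ℝ be a smooth function and consider the time-varying ODE ẋ(t) = k a sin(ωt) J(x(t) + a sin(ωt)) with a > 0 and period T = 2π/ω. Then the averaged system (1/T)∫₀ᵀ k a sin(ωt) J(z + a sin(ωt)) dt equals (k a²/2) J'(z) + O(a⁴), i.e., the averaged vector field differs from the scaled gradient (k a²/2) J'(z) by a term bounded by C a⁴ for some constant C depending on bounds of higher derivatives of J. -/

import Mathlib

noncomputable section
open intervalIntegral

lemma sin_pow_int (ω : ℝ) (hω : ω ≠ 0) (n : ℕ) :
    (∫ t in (0:ℝ)..(2 * Real.pi / ω), Real.sin (ω * t) ^ n)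
      = ω⁻¹ * ∫ x in (0:ℝ)..(2 * Real.pi), Real.sin x ^ n := by
  rw [intervalIntegral.integral_comp_mul_left (fun x => Real.sin x ^ n) hω]
  rw [mul_zero, mul_div_cancel₀ _ hω, smul_eq_mul]

lemma sin1' : (∫ x in (0:ℝ)..(2 * Real.pi), Real.sin x ^ 1) = 0 := by
  simp [integral_sin]

lemma sin2' : (∫ x in (0:ℝ)..(2 * Real.pi), Real.sin x ^ 2) = Real.pi := by
  simp [integral_sin_sq]

lemma sin3' : (∫ x in (0:ℝ)..(2 * Real.pi), Real.sin x ^ 3) = 0 := by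
  have := integral_sin_pow 1 (a := 0) (b := 2*Real.pi)
  norm_num at this
  simpa [integral_sin] using this

lemma hasDerivAt_const_mul_id' (c x : ℝ) : HasDerivAt (fun y : ℝ => c * y) c x := by
  simpa using (hasDerivAt_id x).const_mul c

/-- For a smooth `J : ℝ → ℝ`, the average over one period `T = 2π/ω` of the extremum-seeking
vector field `k a sin(ωt) J(z + a sin(ωt))` equals the scaled gradient `(k a²/2) J'(z)` up to a
remainder of order `a⁴`: on any compact set of points `z` and any range `0 < a ≤ A` of
amplitudes, there is a constant `C` (depending on bounds of higher derivatives of `J`) with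
`|(1/T)∫₀ᵀ k a sin(ωt) J(z + a sin(ωt)) dt − (k a²/2) J'(z)| ≤ C a⁴`. -/
theorem averaged_extremum_seeking_is_perturbed_gradient
    (J : ℝ → ℝ) (hJ : ContDiff ℝ (⊤ : ℕ∞) J) (k ω : ℝ) (hω : 0 < ω)
    (K : Set ℝ) (hK : IsCompact K) (A : ℝ) (hA : 0 < A) :
    ∃ C : ℝ, ∀ a : ℝ, 0 < a → a ≤ A → ∀ z ∈ K,
      |(1 / (2 * Real.pi / ω)) *
          (∫ t in (0:ℝ)..(2 * Real.pi / ω),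
            k * a * Real.sin (ω * t) * J (z + a * Real.sin (ω * t)))
        - k * a ^ 2 / 2 * deriv J z| ≤ C * a ^ 4 := by
  have hωne : ω ≠ 0 := ne_of_gt hω
  have hπ : (0:ℝ) < Real.pi := Real.pi_pos
  have hT0 : 0 < 2 * Real.pi / ω := by positivity
  -- derivatives of J
  have hJi : ContDiff ℝ (⊤ : ℕ∞) J := hJ.of_le (by simp)
  have c1 : ContDiff ℝ (⊤ : ℕ∞) (deriv J) := (contDiff_infty_iff_deriv.mp hJi).2
  have c2 : ContDiff ℝ (⊤ : ℕ∞) (deriv (deriv J)) := (contDiff_infty_iff_deriv.mp c1).2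
  have c3 : ContDiff ℝ (⊤ : ℕ∞) (deriv (deriv (deriv J))) := (contDiff_infty_iff_deriv.mp c2).2
  have d0 : Differentiable ℝ J := hJi.differentiable (by simp)
  have d1 : Differentiable ℝ (deriv J) := c1.differentiable (by simp)
  have d2 : Differentiable ℝ (deriv (deriv J)) := c2.differentiable (by simp)
  have hJc : Continuous J := hJ.continuous
  -- bound on the third derivative on a compact neighborhood of K
  obtain ⟨R, hR⟩ := hK.isBounded.exists_norm_le
  set S : Set ℝ := Set.Icc (-(|R| + A)) (|R| + A) with hSdef
  obtain ⟨M, hM⟩ := (isCompact_Icc :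
      IsCompact S).exists_bound_of_continuousOn c3.continuous.continuousOn
  set M' := max M 0 with hM'def
  have hM'0 : 0 ≤ M' := le_max_right _ _
  refine ⟨|k| * M', ?_⟩
  intro a ha haA z hz
  have hzR : |z| ≤ |R| := le_trans (hR z hz) (le_abs_self R)
  have hmem : ∀ s : ℝ, |s| ≤ a → z + s ∈ S := by
    intro s hs
    have : |z + s| ≤ |R| + A := by
      calc |z + s| ≤ |z| + |s| := abs_add_le _ _
        _ ≤ |R| + A := add_le_add hzR (hs.trans haA)
    exact Set.mem_Icc.mpr (abs_le.mp this)
  have hbound3 : ∀ s : ℝ, |s| ≤ a → |deriv (deriv (deriv J)) (z + s)| ≤ M' := by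
    intro s hs
    have h := hM (z + s) (hmem s hs)
    rw [Real.norm_eq_abs] at h
    exact h.trans (le_max_left M 0)
  -- the Taylor remainder
  set h0 : ℝ → ℝ := fun s =>
    J (z + s) - J z - deriv J z * s - deriv (deriv J) z * s ^ 2 / 2 with hh0def
  have hIa : Convex ℝ (Set.Icc (-a) a) := convex_Icc _ _
  have h0a : (0:ℝ) ∈ Set.Icc (-a) a := by constructor <;> nlinarith
  have memIa : ∀ s ∈ Set.Icc (-a) a, |s| ≤ a := fun s hs => abs_le.mpr ⟨hs.1, hs.2⟩
  -- second-level remainder bound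
  have h2bound : ∀ y ∈ Set.Icc (-a) a,
      |deriv (deriv J) (z + y) - deriv (deriv J) z| ≤ M' * a := by
    intro y hy
    have := hIa.norm_image_sub_le_of_norm_hasDerivWithin_le
      (f := fun x => deriv (deriv J) (z + x) - deriv (deriv J) z)
      (f' := fun x => deriv (deriv (deriv J)) (z + x)) (C := M')
      (fun x hx => (((d2 (z + x)).hasDerivAt.comp_const_add z x).sub_const
        (deriv (deriv J) z)).hasDerivWithinAt)
      (fun x hx => by simpa [Real.norm_eq_abs] using hbound3 x (memIa x hx))
      h0a hy
    simp only [add_zero, sub_self, sub_zero, Real.norm_eq_abs] at this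
    calc |deriv (deriv J) (z + y) - deriv (deriv J) z| ≤ M' * |y| := this
      _ ≤ M' * a := mul_le_mul_of_nonneg_left (memIa y hy) hM'0
  have h1bound : ∀ y ∈ Set.Icc (-a) a,
      |deriv J (z + y) - deriv J z - deriv (deriv J) z * y| ≤ M' * a * a := by
    intro y hy
    have := hIa.norm_image_sub_le_of_norm_hasDerivWithin_le
      (f := fun x => deriv J (z + x) - deriv J z - deriv (deriv J) z * x)
      (f' := fun x => deriv (deriv J) (z + x) - deriv (deriv J) z) (C := M' * a)
      (fun x hx => ((((d1 (z + x)).hasDerivAt.comp_const_add z x).sub_const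
          (deriv J z)).sub (hasDerivAt_const_mul_id' (deriv (deriv J) z) x)).hasDerivWithinAt)
      (fun x hx => by simpa [Real.norm_eq_abs] using h2bound x hx)
      h0a hy
    simp only [add_zero, mul_zero, sub_self, sub_zero, Real.norm_eq_abs] at this
    calc |deriv J (z + y) - deriv J z - deriv (deriv J) z * y| ≤ M' * a * |y| := this
      _ ≤ M' * a * a := mul_le_mul_of_nonneg_left (memIa y hy) (by positivity)
  have h0bound : ∀ y : ℝ, |y| ≤ a → |h0 y| ≤ M' * (a * a * a) := by
    intro y hy
    have hyIa : y ∈ Set.Icc (-a) a := Set.mem_Icc.mpr (abs_le.mp hy)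
    have := hIa.norm_image_sub_le_of_norm_hasDerivWithin_le
      (f := h0)
      (f' := fun x => deriv J (z + x) - deriv J z - deriv (deriv J) z * x) (C := M' * a * a)
      (fun x hx => by
        have hq : HasDerivAt (fun x : ℝ => deriv (deriv J) z * x ^ 2 / 2)
            (deriv (deriv J) z * x) x := by
          have := ((hasDerivAt_pow 2 x).const_mul (deriv (deriv J) z)).div_const 2
          refine this.congr_deriv ?_
          ring
        exact (((((d0 (z + x)).hasDerivAt.comp_const_add z x).sub_const (J z)).sub
          (hasDerivAt_const_mul_id' (deriv J z) x)).sub hq).hasDerivWithinAt)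
      (fun x hx => by simpa [Real.norm_eq_abs] using h1bound x hx)
      h0a hyIa
    have h00 : h0 0 = 0 := by simp [hh0def]
    rw [h00, sub_zero, sub_zero, Real.norm_eq_abs, Real.norm_eq_abs] at this
    calc |h0 y| ≤ M' * a * a * |y| := this
      _ ≤ M' * (a * a * a) := by
          have h := mul_le_mul_of_nonneg_left hy (show (0:ℝ) ≤ M' * a * a by positivity)
          linarith
  -- continuity of h0
  have hch0 : Continuous h0 := by
    rw [hh0def]; fun_prop
  -- split the integrand
  have key : ∀ t : ℝ, k * a * Real.sin (ω * t) * J (z + a * Real.sin (ω * t))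
      = (k * a * J z) * Real.sin (ω * t) ^ 1
        + (k * a ^ 2 * deriv J z) * Real.sin (ω * t) ^ 2
        + (k * a ^ 3 * deriv (deriv J) z / 2) * Real.sin (ω * t) ^ 3
        + (k * a * Real.sin (ω * t)) * h0 (a * Real.sin (ω * t)) := by
    intro t; simp only [hh0def]; ring
  have int1 : IntervalIntegrable (fun t => (k * a * J z) * Real.sin (ω * t) ^ 1)
      MeasureTheory.volume 0 (2 * Real.pi / ω) := (by fun_prop : Continuous _).intervalIntegrable _ _
  have int2 : IntervalIntegrable (fun t => (k * a ^ 2 * deriv J z) * Real.sin (ω * t) ^ 2)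
      MeasureTheory.volume 0 (2 * Real.pi / ω) := (by fun_prop : Continuous _).intervalIntegrable _ _
  have int3 : IntervalIntegrable
      (fun t => (k * a ^ 3 * deriv (deriv J) z / 2) * Real.sin (ω * t) ^ 3)
      MeasureTheory.volume 0 (2 * Real.pi / ω) := (by fun_prop : Continuous _).intervalIntegrable _ _
  have int4 : IntervalIntegrable
      (fun t => (k * a * Real.sin (ω * t)) * h0 (a * Real.sin (ω * t)))
      MeasureTheory.volume 0 (2 * Real.pi / ω) := by
    apply Continuous.intervalIntegrable
    exact (by fun_prop : Continuous fun t => k * a * Real.sin (ω * t)).mul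
      (hch0.comp (by fun_prop))
  set R4 : ℝ := ∫ t in (0:ℝ)..(2 * Real.pi / ω),
      (k * a * Real.sin (ω * t)) * h0 (a * Real.sin (ω * t)) with hR4def
  have hI : (∫ t in (0:ℝ)..(2 * Real.pi / ω),
        k * a * Real.sin (ω * t) * J (z + a * Real.sin (ω * t)))
      = k * a ^ 2 * deriv J z * (ω⁻¹ * Real.pi) + R4 := by
    simp only [key]
    rw [intervalIntegral.integral_add (int1.add int2 |>.add int3) int4,
        intervalIntegral.integral_add (int1.add int2) int3,
        intervalIntegral.integral_add int1 int2,
        intervalIntegral.integral_const_mul, intervalIntegral.integral_const_mul,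
        intervalIntegral.integral_const_mul,
        sin_pow_int ω hωne 1, sin_pow_int ω hωne 2, sin_pow_int ω hωne 3,
        sin1', sin2', sin3']
    ring
  rw [hI]
  have hcancel : 1 / (2 * Real.pi / ω) * (k * a ^ 2 * deriv J z * (ω⁻¹ * Real.pi) + R4)
      - k * a ^ 2 / 2 * deriv J z = 1 / (2 * Real.pi / ω) * R4 := by
    field_simp
    ring
  rw [hcancel]
  have hR4bound : |R4| ≤ (|k| * M' * a ^ 4) * |2 * Real.pi / ω - 0| := by
    rw [hR4def, ← Real.norm_eq_abs]
    apply intervalIntegral.norm_integral_le_of_norm_le_const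
    intro t ht
    have hs : |a * Real.sin (ω * t)| ≤ a := by
      rw [abs_mul, abs_of_pos ha]
      nlinarith [Real.abs_sin_le_one (ω * t), abs_nonneg (Real.sin (ω * t))]
    have h1 : |h0 (a * Real.sin (ω * t))| ≤ M' * (a * a * a) := h0bound _ hs
    rw [Real.norm_eq_abs, abs_mul]
    have h2 : |k * a * Real.sin (ω * t)| ≤ |k| * a := by
      rw [abs_mul, abs_mul, abs_of_pos ha]
      exact mul_le_of_le_one_right (by positivity) (Real.abs_sin_le_one _)
    calc |k * a * Real.sin ( ω * t)| * |h0 (a * Real.sin (ω * t))|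
        ≤ (|k| * a) * (M' * (a * a * a)) := by
          apply mul_le_mul h2 h1 (abs_nonneg _) (by positivity)
      _ = |k| * M' * a ^ 4 := by ring
  rw [abs_mul, abs_of_pos (by positivity : (0:ℝ) < 1 / (2 * Real.pi / ω))]
  rw [sub_zero, abs_of_pos hT0] at hR4bound
  calc 1 / (2 * Real.pi / ω) * |R4|
      ≤ 1 / (2 * Real.pi / ω) * (|k| * M' * a ^ 4 * (2 * Real.pi / ω)) :=
        mul_le_mul_of_nonneg_left hR4bound (by positivity)
    _ = |k| * M' * a ^ 4 := by field_simp
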